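/- Let s ∈ ℤ and let u, w be complex numbers with 0 < |u| < 1 and |u|^{2−2s} < |w| < |u|^{−2s−2}. For each integer m set R_m = max(m, 2−m). Then Σ_{m∈ℤ} w^{6m−4s−6} ( Σ_{ℓ=0}^∞ ( u^{4(3ℓ+s+1)(3m+3ℓ−s−2)} − u^{4(3ℓ+s+2)(3m+3ℓ−s−1)} ) ) = Σ_{m∈ℤ} w^{6m−4s−6} u^{−(3m−2s−3)²} ( Σ_{j=0}^∞ ( u^{(3(R_m+2j)−1)²} − u^{(3(R_m+2j)+1)²} ) ), where each inner series converges absolutely for 0 < |u| < 1 and both outer series over m converge absolutely in the stated annulus. -/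

import Mathlib

/-!
Each difference of standard characters factors as `u^{-(3m-2s-3)²}` times the singlet summand
`u^{(3k-1)²} - u^{(3k+1)²}` at `k = m + 2ℓ`. That summand is odd in `k`, so for `m ≤ 0` the terms
`k = m, m + 2, …, -m` cancel in pairs and the `ℓ`-series becomes the singlet character at
`R_m = 2 - m`. For the outer series, `|ch M_{R,1}| ≤ C |u|^{(3R-1)²}` and `(3R_m - 1)²` dominates
both `(3m - 1)²` and `(3m - 5)²`; against either one the quadratic part of the exponent of `u`
cancels, leaving a geometric bound in `m`, with ratio `< 1` towards `+∞` by the outer annulus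
condition and towards `-∞` by the inner one.
-/

open Finset

theorem zpow_mul_add_mul_zpow_mul_add {G₀ : Type*} [CommGroupWithZero G₀] {x y : G₀}
    (hx : x ≠ 0) (hy : y ≠ 0) (a b c d m : ℤ) :
    x ^ (a * m + b) * y ^ (c * m + d) = x ^ b * y ^ d * (x ^ a * y ^ c) ^ m := by
  rw [zpow_add₀ hx, zpow_add₀ hy, zpow_mul, zpow_mul, mul_zpow]
  ac_rfl

theorem summable_of_le_zpow_of_le_zpow {f : ℤ → ℝ} {a b x y : ℝ} (hf : ∀ m, 0 ≤ f m)
    (hx0 : 0 ≤ x) (hx1 : x < 1) (hy : 1 < y)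
    (hfx : ∀ m, f m ≤ a * x ^ m) (hfy : ∀ m, f m ≤ b * y ^ m) : Summable f := by
  refine Summable.of_nat_of_neg ?_ ?_
  · refine ((summable_geometric_of_lt_one hx0 hx1).mul_left a).of_nonneg_of_le
      (fun n => hf n) fun n => ?_
    simpa using hfx n
  · refine ((summable_geometric_of_lt_one (inv_nonneg.2 (zero_le_one.trans hy.le))
      (inv_lt_one_of_one_lt₀ hy)).mul_left b).of_nonneg_of_le (fun n => hf _) fun n => ?_
    simpa [zpow_neg, inv_pow] using hfy (-n)

theorem mul_zpow_lt_one_of_lt_zpow_neg {x y : ℝ} {k : ℤ} (hy : 0 < y) (h : x < y ^ (-k)) :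
    x * y ^ k < 1 := by
  calc x * y ^ k < y ^ (-k) * y ^ k := by gcongr
    _ = 1 := by rw [← zpow_add₀ hy.ne', neg_add_cancel, zpow_zero]

theorem one_lt_mul_zpow_of_zpow_neg_lt {x y : ℝ} {k : ℤ} (hy : 0 < y) (h : y ^ (-k) < x) :
    1 < x * y ^ k := by
  calc 1 = y ^ (-k) * y ^ k := by rw [← zpow_add₀ hy.ne', neg_add_cancel, zpow_zero]
    _ < x * y ^ k := by gcongr

theorem Finset.sum_range_eq_zero_of_reflect_eq_neg {R : Type*} [Ring R] [NoZeroDivisors R]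
    [CharZero R] {f : ℕ → R} {t : ℕ} (hf : ∀ i < t, f (t - 1 - i) = -f i) :
    ∑ i ∈ range t, f i = 0 := by
  have hrefl := sum_range_reflect f t
  rw [sum_congr rfl fun i hi => hf i (mem_range.mp hi), sum_neg_distrib] at hrefl
  exact add_self_eq_zero.mp (eq_neg_iff_add_eq_zero.mp hrefl.symm)

noncomputable def singletTerm (u : ℂ) (k : ℤ) : ℂ :=
  u ^ ((3 * k - 1) ^ 2) - u ^ ((3 * k + 1) ^ 2)

/-- The eta-rescaled character of the module `M_{R,1}` of the singlet algebra `𝓜(3)`. -/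
noncomputable def singletChar (u : ℂ) (R : ℤ) : ℂ :=
  ∑' j : ℕ, singletTerm u (R + 2 * j)

theorem singletTerm_neg (u : ℂ) (k : ℤ) : singletTerm u (-k) = -singletTerm u k := by
  rw [singletTerm, singletTerm, show (3 * -k - 1) ^ 2 = (3 * k + 1) ^ 2 by ring,
    show (3 * -k + 1) ^ 2 = (3 * k - 1) ^ 2 by ring, neg_sub]

section

variable {u : ℂ}

theorem norm_singletTerm_add_two_mul_le (hu0 : 0 < ‖u‖) (hu1 : ‖u‖ ≤ 1) {a : ℤ} (ha : 0 ≤ a)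
    (j : ℕ) : ‖singletTerm u (a + 2 * j)‖ ≤ 2 * ‖u‖ ^ ((3 * a - 1) ^ 2) * ‖u‖ ^ j := by
  have hle : ∀ e : ℤ, (3 * a - 1) ^ 2 + j ≤ e → ‖u‖ ^ e ≤ ‖u‖ ^ ((3 * a - 1) ^ 2) * ‖u‖ ^ j :=
    fun e he => by
      rw [← zpow_natCast, ← zpow_add₀ hu0.ne']
      exact zpow_le_zpow_right_of_le_one₀ hu0 hu1 he
  calc ‖singletTerm u (a + 2 * j)‖
      ≤ ‖u‖ ^ ((3 * (a + 2 * j) - 1) ^ 2) + ‖u‖ ^ ((3 * (a + 2 * j) + 1) ^ 2) := by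
        rw [singletTerm, ← norm_zpow, ← norm_zpow]
        exact norm_sub_le _ _
    _ ≤ ‖u‖ ^ ((3 * a - 1) ^ 2) * ‖u‖ ^ j + ‖u‖ ^ ((3 * a - 1) ^ 2) * ‖u‖ ^ j := by
        have hj : (0 : ℤ) ≤ a * j := mul_nonneg ha j.cast_nonneg
        gcongr <;> apply hle <;> nlinarith [Int.le_self_sq j]
    _ = 2 * ‖u‖ ^ ((3 * a - 1) ^ 2) * ‖u‖ ^ j := by ring

theorem summable_norm_singletTerm (hu0 : 0 < ‖u‖) (hu1 : ‖u‖ < 1) (a : ℤ) :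
    Summable fun j : ℕ => ‖singletTerm u (a + 2 * j)‖ := by
  refine (summable_nat_add_iff a.natAbs).mp ?_
  have hshift (j : ℕ) : a + 2 * ((j + a.natAbs : ℕ) : ℤ) = (a + 2 * a.natAbs) + 2 * j := by
    push_cast; ring
  simp only [hshift]
  exact ((summable_geometric_of_lt_one hu0.le hu1).mul_left _).of_nonneg_of_le
    (fun _ => norm_nonneg _) (norm_singletTerm_add_two_mul_le hu0 hu1.le (by omega))

theorem norm_singletChar_le (hu0 : 0 < ‖u‖) (hu1 : ‖u‖ < 1) {R : ℤ} (hR : 0 ≤ R) :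
    ‖singletChar u R‖ ≤ 2 * (1 - ‖u‖)⁻¹ * ‖u‖ ^ ((3 * R - 1) ^ 2) := by
  have hgeom := summable_geometric_of_lt_one hu0.le hu1
  calc ‖singletChar u R‖ ≤ ∑' j : ℕ, ‖singletTerm u (R + 2 * j)‖ :=
        norm_tsum_le_tsum_norm (summable_norm_singletTerm hu0 hu1 R)
    _ ≤ ∑' j : ℕ, 2 * ‖u‖ ^ ((3 * R - 1) ^ 2) * ‖u‖ ^ j :=
        (summable_norm_singletTerm hu0 hu1 R).tsum_le_tsum
          (norm_singletTerm_add_two_mul_le hu0 hu1.le hR) (hgeom.mul_left _)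
    _ = 2 * (1 - ‖u‖)⁻¹ * ‖u‖ ^ ((3 * R - 1) ^ 2) := by
        rw [tsum_mul_left, tsum_geometric_of_lt_one hu0.le hu1]
        ring

theorem tsum_singletTerm_eq_singletChar_max (hu0 : 0 < ‖u‖) (hu1 : ‖u‖ < 1) (m : ℤ) :
    ∑' l : ℕ, singletTerm u (m + 2 * l) = singletChar u (max m (2 - m)) := by
  rcases le_or_gt (2 - m) m with hm | hm
  · rw [max_eq_left hm, singletChar]
  set t := (1 - m).toNat
  have ht : (t : ℤ) = 1 - m := Int.toNat_of_nonneg (by omega)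
  have hcancel : ∑ i ∈ range t, singletTerm u (m + 2 * i) = 0 :=
    sum_range_eq_zero_of_reflect_eq_neg fun i hi => by
      rw [← singletTerm_neg]
      congr 1
      push_cast [Nat.sub_sub, Nat.cast_sub (show 1 + i ≤ t by omega), ht]
      ring
  rw [max_eq_right hm.le, ← (summable_norm_singletTerm hu0 hu1 m).of_norm.sum_add_tsum_nat_add t,
    hcancel, zero_add, singletChar]
  congr 1 with l
  push_cast [ht]
  ring_nf

theorem zpow_sub_zpow_eq_mul_singletTerm (hu : u ≠ 0) (s m : ℤ) (l : ℕ) :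
    u ^ (4 * (3 * (l : ℤ) + s + 1) * (3 * m + 3 * (l : ℤ) - s - 2))
        - u ^ (4 * (3 * (l : ℤ) + s + 2) * (3 * m + 3 * (l : ℤ) - s - 1))
      = u ^ (-(3 * m - 2 * s - 3) ^ 2) * singletTerm u (m + 2 * l) := by
  rw [show 4 * (3 * (l : ℤ) + s + 1) * (3 * m + 3 * (l : ℤ) - s - 2)
      = -(3 * m - 2 * s - 3) ^ 2 + (3 * (m + 2 * l) - 1) ^ 2 by ring,
    show 4 * (3 * (l : ℤ) + s + 2) * (3 * m + 3 * (l : ℤ) - s - 1)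
      = -(3 * m - 2 * s - 3) ^ 2 + (3 * (m + 2 * l) + 1) ^ 2 by ring,
    zpow_add₀ hu, zpow_add₀ hu, singletTerm, mul_sub]

theorem summable_norm_zpow_sub_zpow (hu0 : 0 < ‖u‖) (hu1 : ‖u‖ < 1) (s m : ℤ) :
    Summable fun l : ℕ =>
      ‖u ^ (4 * (3 * (l : ℤ) + s + 1) * (3 * m + 3 * (l : ℤ) - s - 2))
        - u ^ (4 * (3 * (l : ℤ) + s + 2) * (3 * m + 3 * (l : ℤ) - s - 1))‖ := by
  simp only [zpow_sub_zpow_eq_mul_singletTerm (norm_pos_iff.mp hu0), norm_mul]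
  exact (summable_norm_singletTerm hu0 hu1 m).mul_left _

theorem tsum_zpow_sub_zpow_eq (hu0 : 0 < ‖u‖) (hu1 : ‖u‖ < 1) (s m : ℤ) :
    ∑' l : ℕ, (u ^ (4 * (3 * (l : ℤ) + s + 1) * (3 * m + 3 * (l : ℤ) - s - 2))
        - u ^ (4 * (3 * (l : ℤ) + s + 2) * (3 * m + 3 * (l : ℤ) - s - 1)))
      = u ^ (-(3 * m - 2 * s - 3) ^ 2) * singletChar u (max m (2 - m)) := by
  simp only [zpow_sub_zpow_eq_mul_singletTerm (norm_pos_iff.mp hu0), tsum_mul_left,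
    tsum_singletTerm_eq_singletChar_max hu0 hu1]

theorem norm_zpow_mul_singletChar_le (hu0 : 0 < ‖u‖) (hu1 : ‖u‖ < 1) (w : ℂ) (s m : ℤ) {e : ℤ}
    (he : e ≤ (3 * max m (2 - m) - 1) ^ 2) :
    ‖w ^ (6 * m - 4 * s - 6) * u ^ (-(3 * m - 2 * s - 3) ^ 2) * singletChar u (max m (2 - m))‖
      ≤ 2 * (1 - ‖u‖)⁻¹ * (‖w‖ ^ (6 * m - 4 * s - 6) * ‖u‖ ^ (-(3 * m - 2 * s - 3) ^ 2 + e)) := by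
  have hC : 0 ≤ 2 * (1 - ‖u‖)⁻¹ := by have := hu1; positivity
  rw [norm_mul, norm_mul, norm_zpow, norm_zpow, zpow_add₀ hu0.ne']
  calc _ ≤ ‖w‖ ^ (6 * m - 4 * s - 6) * ‖u‖ ^ (-(3 * m - 2 * s - 3) ^ 2) *
        (2 * (1 - ‖u‖)⁻¹ * ‖u‖ ^ ((3 * max m (2 - m) - 1) ^ 2)) := by
        gcongr
        exact norm_singletChar_le hu0 hu1 (by omega)
    _ ≤ ‖w‖ ^ (6 * m - 4 * s - 6) * ‖u‖ ^ (-(3 * m - 2 * s - 3) ^ 2) *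
        (2 * (1 - ‖u‖)⁻¹ * ‖u‖ ^ e) := by
        gcongr _ * (_ * ?_)
        exact zpow_le_zpow_right_of_le_one₀ hu0 hu1.le he
    _ = _ := by ring

theorem summable_norm_zpow_mul_singletChar (s : ℤ) {w : ℂ} (hu0 : 0 < ‖u‖) (hu1 : ‖u‖ < 1)
    (hw1 : ‖u‖ ^ (2 - 2 * s) < ‖w‖) (hw2 : ‖w‖ < ‖u‖ ^ (-2 * s - 2)) :
    Summable fun m : ℤ =>
      ‖w ^ (6 * m - 4 * s - 6) * u ^ (-(3 * m - 2 * s - 3) ^ 2) * singletChar u (max m (2 - m))‖ := by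
  set q := ‖u‖
  have hw0 : 0 < ‖w‖ := (zpow_pos hu0 _).trans hw1
  have hsq : ∀ m : ℤ, (3 * m - 1) ^ 2 ≤ (3 * max m (2 - m) - 1) ^ 2 ∧
      (3 * m - 5) ^ 2 ≤ (3 * max m (2 - m) - 1) ^ 2 := fun m => by
    rcases max_cases m (2 - m) with ⟨h, _⟩ | ⟨h, _⟩ <;> rw [h] <;> constructor <;> nlinarith
  have hx : ‖w‖ ^ (6 : ℤ) * q ^ (12 * s + 12) < 1 := by
    rw [show 12 * s + 12 = (2 * s + 2) * 6 by ring, zpow_mul, ← mul_zpow]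
    refine zpow_lt_one₀ (by positivity) (mul_zpow_lt_one_of_lt_zpow_neg hu0 ?_) (by norm_num)
    convert hw2 using 2; ring
  have hy : 1 < ‖w‖ ^ (6 : ℤ) * q ^ (12 * s - 12) := by
    rw [show 12 * s - 12 = (2 * s - 2) * 6 by ring, zpow_mul, ← mul_zpow]
    refine one_lt_zpow₀ (one_lt_mul_zpow_of_zpow_neg_lt hu0 ?_) (by norm_num)
    rwa [neg_sub]
  refine summable_of_le_zpow_of_le_zpow (fun _ => norm_nonneg _) (by positivity) hx hy
    (a := 2 * (1 - q)⁻¹ * (‖w‖ ^ (-4 * s - 6) * q ^ (-((2 * s + 2) * (2 * s + 4)))))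
    (b := 2 * (1 - q)⁻¹ * (‖w‖ ^ (-4 * s - 6) * q ^ (-((2 * s - 2) * (2 * s + 8)))))
    (fun m => (norm_zpow_mul_singletChar_le hu0 hu1 w s m (hsq m).1).trans_eq ?_)
    (fun m => (norm_zpow_mul_singletChar_le hu0 hu1 w s m (hsq m).2).trans_eq ?_)
  · rw [show 6 * m - 4 * s - 6 = 6 * m + (-4 * s - 6) by ring,
      show -(3 * m - 2 * s - 3) ^ 2 + (3 * m - 1) ^ 2
        = (12 * s + 12) * m + -((2 * s + 2) * (2 * s + 4)) by ring,
      zpow_mul_add_mul_zpow_mul_add hw0.ne' hu0.ne', ← mul_assoc]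
  · rw [show 6 * m - 4 * s - 6 = 6 * m + (-4 * s - 6) by ring,
      show -(3 * m - 2 * s - 3) ^ 2 + (3 * m - 5) ^ 2
        = (12 * s - 12) * m + -((2 * s - 2) * (2 * s + 8)) by ring,
      zpow_mul_add_mul_zpow_mul_add hw0.ne' hu0.ne', ← mul_assoc]

end

/-- Full character decomposition `ch L_0^s = Σ_{m∈ℤ} ch F_{2m−2−4s/3} · ch M_{m,1}`
for `sl(2)`-hat at level `−4/3`: with `R_m = max(m, 2−m)`,
`Σ_{m∈ℤ} w^{6m−4s−6} (Σ_{ℓ≥0} (u^{4(3ℓ+s+1)(3m+3ℓ−s−2)} − u^{4(3ℓ+s+2)(3m+3ℓ−s−1)}))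
 = Σ_{m∈ℤ} w^{6m−4s−6} u^{−(3m−2s−3)²} (Σ_{j≥0} (u^{(3(R_m+2j)−1)²} − u^{(3(R_m+2j)+1)²}))`,
each inner series converging absolutely for `0 < |u| < 1`, and both outer series over `m`
converging absolutely in the annulus `|u|^{2−2s} < |w| < |u|^{−2s−2}`. -/
theorem stmt_10 (s : ℤ) (u w : ℂ)
    (hu0 : 0 < ‖u‖) (hu1 : ‖u‖ < 1)
    (hw1 : ‖u‖ ^ (2 - 2 * s) < ‖w‖) (hw2 : ‖w‖ < ‖u‖ ^ (-2 * s - 2)) :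
    (∀ m : ℤ, Summable (fun l : ℕ =>
        ‖u ^ (4 * (3 * (l : ℤ) + s + 1) * (3 * m + 3 * (l : ℤ) - s - 2))
          - u ^ (4 * (3 * (l : ℤ) + s + 2) * (3 * m + 3 * (l : ℤ) - s - 1))‖)) ∧
    (∀ m : ℤ, Summable (fun j : ℕ =>
        ‖u ^ ((3 * (max m (2 - m) + 2 * (j : ℤ)) - 1) ^ 2)
          - u ^ ((3 * (max m (2 - m) + 2 * (j : ℤ)) + 1) ^ 2)‖)) ∧
    Summable (fun m : ℤ => ‖w ^ (6 * m - 4 * s - 6) *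
        ∑' l : ℕ, (u ^ (4 * (3 * (l : ℤ) + s + 1) * (3 * m + 3 * (l : ℤ) - s - 2))
          - u ^ (4 * (3 * (l : ℤ) + s + 2) * (3 * m + 3 * (l : ℤ) - s - 1)))‖) ∧
    Summable (fun m : ℤ => ‖w ^ (6 * m - 4 * s - 6) * u ^ (-(3 * m - 2 * s - 3) ^ 2) *
        ∑' j : ℕ, (u ^ ((3 * (max m (2 - m) + 2 * (j : ℤ)) - 1) ^ 2)
          - u ^ ((3 * (max m (2 - m) + 2 * (j : ℤ)) + 1) ^ 2))‖) ∧
    (∑' m : ℤ, w ^ (6 * m - 4 * s - 6) *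
        ∑' l : ℕ, (u ^ (4 * (3 * (l : ℤ) + s + 1) * (3 * m + 3 * (l : ℤ) - s - 2))
          - u ^ (4 * (3 * (l : ℤ) + s + 2) * (3 * m + 3 * (l : ℤ) - s - 1))))
      = ∑' m : ℤ, w ^ (6 * m - 4 * s - 6) * u ^ (-(3 * m - 2 * s - 3) ^ 2) *
          ∑' j : ℕ, (u ^ ((3 * (max m (2 - m) + 2 * (j : ℤ)) - 1) ^ 2)
            - u ^ ((3 * (max m (2 - m) + 2 * (j : ℤ)) + 1) ^ 2)) := by
  have hchar := tsum_zpow_sub_zpow_eq hu0 hu1 s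
  have hbranch := summable_norm_zpow_mul_singletChar s hu0 hu1 hw1 hw2
  refine ⟨summable_norm_zpow_sub_zpow hu0 hu1 s, fun m => summable_norm_singletTerm hu0 hu1 _,
    hbranch.congr fun m => by rw [hchar, mul_assoc], hbranch,
    tsum_congr fun m => by rw [hchar, mul_assoc]; rfl⟩
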